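/- arXiv:1005.3877 — 4 statements merged into one kernel-verified Lean document; each statement's English description precedes it below -/
import Mathlib

section
/- Let d ≥ 1 be an integer. Let E have Mukai vector (r_E, n_E, s_E) with 0 < r_E ≤ √d and (r_E,n_E,s_E)² := 2d·n_E² − 2·r_E·s_E = 0, and let A have Mukai vector (r_A, n_A, s_A) with (r_A,n_A,s_A)² = −2 and r_A > 0. Let x, y be real numbers with y² > 1/d, and set λ_E = n_E − r_E·x, λ_A = n_A − r_A·x. If x < n_A/r_A < n_E/r_E, then λ_E·(−1/r_A + d·r_A·(y² − λ_A²/r_A²)) − λ_A·(d·r_E·(y² − λ_E²/r_E²)) > 0. -/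
set_option maxHeartbeats 1000000


/-- Lemma 4.6(1): the inequality `N_{A,E}(x,y) > 0` for a semi-rigid class
`E` (square 0, `0 < r_E ≤ √d`) and a spherical class `A` (square −2, `r_A > 0`),
with `y² > 1/d` and `x < n_A/r_A < n_E/r_E`. -/
theorem stmt2 (d rE nE sE rA nA sA : ℤ) (hd : 1 ≤ d)
    (hrE : 0 < rE) (hrEd : (rE : ℝ) ≤ Real.sqrt d)
    (hE : 2 * d * nE ^ 2 - 2 * rE * sE = 0)
    (hrA : 0 < rA)
    (hA : 2 * d * nA ^ 2 - 2 * rA * sA = -2)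
    (x y : ℝ) (hy : y ^ 2 > 1 / (d : ℝ))
    (hx1 : x < (nA : ℝ) / rA) (hx2 : (nA : ℝ) / rA < (nE : ℝ) / rE) :
    ((nE : ℝ) - rE * x) *
        (-1 / (rA : ℝ) + d * rA * (y ^ 2 - ((nA : ℝ) - rA * x) ^ 2 / (rA : ℝ) ^ 2))
      - ((nA : ℝ) - rA * x) *
        ((d : ℝ) * rE * (y ^ 2 - ((nE : ℝ) - rE * x) ^ 2 / (rE : ℝ) ^ 2)) > 0 := by
  have hdR : (1 : ℝ) ≤ (d : ℝ) := by exact_mod_cast hd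
  have hrAR : (1 : ℝ) ≤ (rA : ℝ) := by exact_mod_cast hrA
  have hrER : (0 : ℝ) < (rE : ℝ) := by exact_mod_cast hrE
  have hrAR0 : (0 : ℝ) < (rA : ℝ) := by exact_mod_cast hrA
  -- rE^2 ≤ d
  have hrE2 : (rE : ℝ) ^ 2 ≤ (d : ℝ) := by
    have h := mul_self_le_mul_self (le_of_lt hrER) hrEd
    rw [Real.mul_self_sqrt (by linarith : (0:ℝ) ≤ (d:ℝ))] at h
    nlinarith
  -- d * y^2 > 1
  have hdy : (1 : ℝ) < (d : ℝ) * y ^ 2 := by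
    have := (div_lt_iff₀ (by linarith : (0:ℝ) < (d:ℝ))).mp hy
    linarith [this]
  -- λ_A > 0
  have hlA : (0 : ℝ) < (nA : ℝ) - rA * x := by
    have := (lt_div_iff₀ hrAR0).mp hx1
    linarith
  -- M = rA*nE - rE*nA ≥ 1
  have hMZ : 1 ≤ rA * nE - rE * nA := by
    have h2 : (nA : ℝ) * rE < (nE : ℝ) * rA := by
      have := (div_lt_div_iff₀ hrAR0 hrER).mp hx2
      linarith
    have : (rE : ℤ) * nA < rA * nE := by exact_mod_cast (by push_cast; linarith : ((rE : ℝ) * nA : ℝ) < (rA : ℝ) * nE)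
    omega
  have hM : (1 : ℝ) ≤ (rA : ℝ) * nE - rE * nA := by exact_mod_cast hMZ
  have hrA2 : (rA : ℝ)^2 ≠ 0 := by positivity
  have hrE2' : (rE : ℝ)^2 ≠ 0 := by positivity
  rw [gt_iff_lt, ← sub_pos]
  have key : ((nE : ℝ) - rE * x) *
        (-1 / (rA : ℝ) + d * rA * (y ^ 2 - ((nA : ℝ) - rA * x) ^ 2 / (rA : ℝ) ^ 2))
      - ((nA : ℝ) - rA * x) *
        ((d : ℝ) * rE * (y ^ 2 - ((nE : ℝ) - rE * x) ^ 2 / (rE : ℝ) ^ 2)) - 0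
      = ( ((rA:ℝ)*nE - rE*nA) * rE * ((d:ℝ) * rA^2 * y^2 - 1)
        + ((nA : ℝ) - rA * x) * ((d:ℝ) * ((rA:ℝ)*nE - rE*nA)^2 - rE^2)
        + (d:ℝ) * ((rA:ℝ)*nE - rE*nA) * rE * ((nA : ℝ) - rA * x)^2 )
        / ((rA:ℝ)^2 * rE) := by
    field_simp
    ring
  rw [key]
  apply div_pos _ (by positivity)
  have t1 : (0:ℝ) < ((rA:ℝ)*nE - rE*nA) * rE * ((d:ℝ) * rA^2 * y^2 - 1) := by
    apply mul_pos (mul_pos (by linarith) hrER)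
    have h1 : (1:ℝ) ≤ (rA:ℝ)^2 := by
      have := mul_le_mul hrAR hrAR zero_le_one (by linarith)
      nlinarith
    nlinarith [mul_le_mul_of_nonneg_left h1 (by positivity : (0:ℝ) ≤ (d:ℝ)*y^2)]
  have t2 : (0:ℝ) ≤ ((nA : ℝ) - rA * x) * ((d:ℝ) * ((rA:ℝ)*nE - rE*nA)^2 - rE^2) := by
    apply mul_nonneg (le_of_lt hlA)
    have h1 : (1:ℝ) ≤ ((rA:ℝ)*nE - rE*nA)^2 := by
      have := mul_le_mul hM hM zero_le_one (by linarith)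
      nlinarith
    have h2 := mul_le_mul_of_nonneg_left h1 (by linarith : (0:ℝ) ≤ (d:ℝ))
    linarith
  have t3 : (0:ℝ) ≤ (d:ℝ) * ((rA:ℝ)*nE - rE*nA) * rE * ((nA : ℝ) - rA * x)^2 := by
    positivity
  linarith
end

section
/- Let d ≥ 1 be an integer. Let E have Mukai vector (r_E, n_E, s_E) with 0 < r_E ≤ √d and 2d·n_E² − 2·r_E·s_E = 0, and let A have Mukai vector (r_A, n_A, s_A) with 2d·n_A² − 2·r_A·s_A = −2 and r_A > 0. Let x, y be real numbers with y² > 1/d, and set λ_E = n_E − r_E·x, λ_A = n_A − r_A·x. If n_E/r_E < n_A/r_A < x, then λ_E·(−1/r_A + d·r_A·(y² − λ_A²/r_A²)) − λ_A·(d·r_E·(y² − λ_E²/r_E²)) < 0. -/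
set_option maxHeartbeats 1000000 in
/-- Lemma 4.6(2): the inequality `N_{A,E}(x,y) < 0` for a semi-rigid class
`E` (square 0, `0 < r_E ≤ √d`) and a spherical class `A` (square −2, `r_A > 0`),
with `y² > 1/d` and `n_E/r_E < n_A/r_A < x`. -/
theorem stmt3 (d rE nE sE rA nA sA : ℤ) (hd : 1 ≤ d)
    (hrE : 0 < rE) (hrEd : (rE : ℝ) ≤ Real.sqrt d)
    (hE : 2 * d * nE ^ 2 - 2 * rE * sE = 0)
    (hrA : 0 < rA)
    (hA : 2 * d * nA ^ 2 - 2 * rA * sA = -2)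
    (x y : ℝ) (hy : y ^ 2 > 1 / (d : ℝ))
    (hx1 : (nE : ℝ) / rE < (nA : ℝ) / rA) (hx2 : (nA : ℝ) / rA < x) :
    ((nE : ℝ) - rE * x) *
        (-1 / (rA : ℝ) + d * rA * (y ^ 2 - ((nA : ℝ) - rA * x) ^ 2 / (rA : ℝ) ^ 2))
      - ((nA : ℝ) - rA * x) *
        ((d : ℝ) * rE * (y ^ 2 - ((nE : ℝ) - rE * x) ^ 2 / (rE : ℝ) ^ 2)) < 0 := by
  have hrER : (0:ℝ) < rE := by exact_mod_cast hrE
  have hrAR : (0:ℝ) < rA := by exact_mod_cast hrA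
  have hdR : (0:ℝ) < d := by exact_mod_cast hd
  have hrE1 : (1:ℝ) ≤ rE := by exact_mod_cast hrE
  have hrA1 : (1:ℝ) ≤ rA := by exact_mod_cast hrA
  -- rE² ≤ d
  have hd2 : (rE:ℝ)^2 ≤ d := by
    have := Real.sq_sqrt hdR.le
    nlinarith [hrEd, Real.sqrt_nonneg (d:ℝ)]
  -- K := nA rE - nE rA  is an integer ≥ 1
  have hKZ : nE * rA < nA * rE := by
    have h : (nE:ℝ) * rA < (nA:ℝ) * rE := by
      rw [div_lt_div_iff₀ hrER hrAR] at hx1; linarith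
    exact_mod_cast h
  have hK : (1:ℝ) ≤ (nA:ℝ) * rE - nE * rA := by
    have : nE * rA + 1 ≤ nA * rE := hKZ
    have h : ((nE * rA + 1 : ℤ) : ℝ) ≤ ((nA * rE : ℤ) : ℝ) := by exact_mod_cast this
    push_cast at h; linarith
  -- a, b positive
  have ha : (0:ℝ) < rE * x - nE := by
    have hx : (nE:ℝ) / rE < x := lt_trans hx1 hx2
    rw [div_lt_iff₀ hrER] at hx; linarith
  have hb : (0:ℝ) < rA * x - nA := by
    rw [div_lt_iff₀ hrAR] at hx2; linarith
  have hdy : (1:ℝ) < d * y ^ 2 := by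
    rw [gt_iff_lt, div_lt_iff₀ hdR] at hy; linarith
  set a : ℝ := rE * x - nE with hadef
  set b : ℝ := rA * x - nA with hbdef
  set K : ℝ := (nA:ℝ) * rE - nE * rA with hKdef
  have hab : a * rA = b * rE + K := by rw [hadef, hbdef, hKdef]; ring
  have hKpos : (0:ℝ) < K := by linarith
  -- main polynomial inequality: a*rA*rE < K*(d*y²)*rA²*rE + d*a*b*K*rA
  have hrA2 : (1:ℝ) ≤ rA ^ 2 := by nlinarith
  have hmain : a * rA * rE < K * (d * y ^ 2) * rA ^ 2 * rE + d * a * b * K * rA := by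
    have h1 : K * rE ≤ K * rA ^ 2 * rE := by
      nlinarith [mul_nonneg (mul_nonneg hKpos.le hrER.le) (sub_nonneg.mpr hrA2)]
    have h2 : K * rA ^ 2 * rE < K * (d * y ^ 2) * rA ^ 2 * rE := by
      nlinarith [mul_pos (mul_pos (mul_pos hKpos (by positivity : (0:ℝ) < rA ^ 2)) hrER)
        (sub_pos.mpr hdy)]
    have hda : (rE:ℝ)^2 ≤ d * a * rA := by
      have habd : (d:ℝ) * (a * rA) = d * (b * rE + K) := by rw [hab]
      have h5 : (d:ℝ) ≤ d * K := le_mul_of_one_le_right hdR.le hK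
      have h6 : (0:ℝ) ≤ d * (b * rE) := by positivity
      nlinarith [habd, h5, h6]
    have h3 : b * rE ^ 2 ≤ d * a * b * K * rA := by
      have h7 : b * rE ^ 2 ≤ b * (d * a * rA) := by
        exact mul_le_mul_of_nonneg_left hda hb.le
      have h8 : (0:ℝ) ≤ (K - 1) * (b * (d * a * rA)) := by
        have : (0:ℝ) < d * a * rA := by positivity
        have := mul_nonneg (sub_nonneg.mpr hK) (mul_nonneg hb.le this.le)
        linarith
      nlinarith [h7, h8]
    have h4 : a * rA * rE = b * rE ^ 2 + K * rE := by linear_combination hab * rE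
    nlinarith [h1, h2, h3, h4]
  -- clear denominators
  have hpos : (0:ℝ) < rA ^ 2 * rE := by positivity
  have hiden :
      (((nE : ℝ) - rE * x) *
        (-1 / (rA : ℝ) + d * rA * (y ^ 2 - ((nA : ℝ) - rA * x) ^ 2 / (rA : ℝ) ^ 2))
      - ((nA : ℝ) - rA * x) *
        ((d : ℝ) * rE * (y ^ 2 - ((nE : ℝ) - rE * x) ^ 2 / (rE : ℝ) ^ 2))) * (rA ^ 2 * rE)
      = a * rA * rE - K * (d * y ^ 2) * rA ^ 2 * rE - d * a * b * K * rA := by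
    rw [hadef, hbdef, hKdef]
    field_simp
    ring
  have hNP :
      (((nE : ℝ) - rE * x) *
        (-1 / (rA : ℝ) + d * rA * (y ^ 2 - ((nA : ℝ) - rA * x) ^ 2 / (rA : ℝ) ^ 2))
      - ((nA : ℝ) - rA * x) *
        ((d : ℝ) * rE * (y ^ 2 - ((nE : ℝ) - rE * x) ^ 2 / (rE : ℝ) ^ 2))) * (rA ^ 2 * rE)
      < 0 := by rw [hiden]; linarith
  by_contra h
  push_neg at h
  nlinarith [mul_nonneg h hpos.le]
end

section
/- Let d ≥ 1 be an integer. Let A and E be spherical classes: v(A) = (r_A, n_A, s_A), v(E) = (r_E, n_E, s_E) with r_A, r_E > 0, both squares equal to −2 (i.e. 2d·n² − 2rs = −2), and r_E ≤ √d. Let x, y be reals with y² > 1/d, λ_E = n_E − r_E·x, λ_A = n_A − r_A·x. If x < n_A/r_A < n_E/r_E, then λ_E·(−1/r_A + d·r_A·(y² − λ_A²/r_A²)) − λ_A·(−1/r_E + d·r_E·(y² − λ_E²/r_E²)) > 0. -/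
set_option maxHeartbeats 800000


/-- Lemma 5.1(1): the inequality `N_{A,E}(x,y) > 0` for two spherical
classes (square −2, positive ranks) with `r_E ≤ √d`, `y² > 1/d` and
`x < n_A/r_A < n_E/r_E`. -/
theorem stmt4 (d rE nE sE rA nA sA : ℤ) (hd : 1 ≤ d)
    (hrE : 0 < rE) (hrA : 0 < rA) (hrEd : (rE : ℝ) ≤ Real.sqrt d)
    (hE : 2 * d * nE ^ 2 - 2 * rE * sE = -2)
    (hA : 2 * d * nA ^ 2 - 2 * rA * sA = -2)
    (x y : ℝ) (hy : y ^ 2 > 1 / (d : ℝ))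
    (hx1 : x < (nA : ℝ) / rA) (hx2 : (nA : ℝ) / rA < (nE : ℝ) / rE) :
    ((nE : ℝ) - rE * x) *
        (-1 / (rA : ℝ) + d * rA * (y ^ 2 - ((nA : ℝ) - rA * x) ^ 2 / (rA : ℝ) ^ 2))
      - ((nA : ℝ) - rA * x) *
        (-1 / (rE : ℝ) + d * rE * (y ^ 2 - ((nE : ℝ) - rE * x) ^ 2 / (rE : ℝ) ^ 2)) > 0 := by
  have hRA0 : (0:ℝ) < (rA:ℝ) := by exact_mod_cast hrA
  have hRE0 : (0:ℝ) < (rE:ℝ) := by exact_mod_cast hrE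
  have hRA1 : (1:ℝ) ≤ (rA:ℝ) := by exact_mod_cast hrA
  have hRE1 : (1:ℝ) ≤ (rE:ℝ) := by exact_mod_cast hrE
  have hd0 : (0:ℝ) < (d:ℝ) := by exact_mod_cast lt_of_lt_of_le one_pos hd
  -- rE^2 ≤ d
  have hdRE : ((rE:ℝ))^2 ≤ (d:ℝ) := by
    have h := pow_le_pow_left₀ (le_of_lt hRE0) hrEd 2
    rwa [Real.sq_sqrt hd0.le] at h
  -- 1 < d * y^2
  have h1 : (1:ℝ) < (d:ℝ) * y ^ 2 := by
    have := (div_lt_iff₀ hd0).mp hy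
    linarith
  -- the integer k = nE*rA - nA*rE is at least 1
  have hkZ : (1:ℤ) ≤ nE * rA - nA * rE := by
    have h : (nA:ℝ) * rE < (nE:ℝ) * rA := by
      have := (div_lt_div_iff₀ hRA0 hRE0).mp hx2
      linarith
    have : (nA:ℤ) * rE < nE * rA := by exact_mod_cast h
    omega
  set k : ℝ := ((nE * rA - nA * rE : ℤ) : ℝ) with hkdef
  have hk : (1:ℝ) ≤ k := by rw [hkdef]; exact_mod_cast hkZ
  set lA : ℝ := (nA:ℝ) - rA * x with hlAdef
  set lE : ℝ := (nE:ℝ) - rE * x with hlEdef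
  have hrel : lE * rA - lA * rE = k := by rw [hlAdef, hlEdef, hkdef]; push_cast; ring
  have hlA : 0 < lA := by
    have := (lt_div_iff₀ hRA0).mp hx1
    rw [hlAdef]; linarith
  have hlE : 0 < lE := by nlinarith [hrel, hlA, hk, hRE0, hRA0]
  -- the key polynomial quantity Q = rA * rE * (goal LHS)
  set Q : ℝ := (d:ℝ) * y ^ 2 * rA * rE * k + lA * rA - lE * rE + (d:ℝ) * lA * lE * k with hQdef
  have hlERA : k ≤ lE * rA := by nlinarith [hrel, hlA, hRE0]
  have hk0 : (0:ℝ) < k := lt_of_lt_of_le one_pos hk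
  have f1 : k * rE < (d:ℝ) * y ^ 2 * rA ^ 2 * rE * k := by
    have ha : 0 < ((d:ℝ) * y ^ 2 - 1) * (rA ^ 2 * rE * k) :=
      mul_pos (by linarith) (by positivity)
    have hb : 0 ≤ ((rA:ℝ) ^ 2 - 1) * (rE * k) :=
      mul_nonneg (by nlinarith [hRA1]) (by positivity)
    nlinarith [ha, hb]
  have f2 : lA * (rE:ℝ) ^ 2 ≤ (d:ℝ) * lA * lE * k * rA := by
    have hek : (1:ℝ) ≤ lE * rA * k := by nlinarith [hlERA, hk]
    have h5 : ((rE:ℝ)) ^ 2 ≤ (d:ℝ) * (lE * rA * k) :=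
      le_trans hdRE (le_mul_of_one_le_right hd0.le hek)
    have h6 := mul_le_mul_of_nonneg_left h5 hlA.le
    nlinarith [h6]
  have f3 : 0 < lA * (rA:ℝ) ^ 2 := by positivity
  have hQRA : 0 < Q * rA := by
    have hid : Q * rA = (d:ℝ) * y ^ 2 * rA ^ 2 * rE * k - k * rE + lA * rA ^ 2
        - lA * rE ^ 2 + (d:ℝ) * lA * lE * k * rA := by
      rw [hQdef]; linear_combination (-(rE:ℝ)) * hrel
    rw [hid]; linarith
  have hQ : 0 < Q := by nlinarith [hQRA, hRA0]
  -- relate the goal to Q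
  have hP : 0 < lE * rE * (-1 + (d:ℝ) * rA ^ 2 * y ^ 2 - d * lA ^ 2)
      - lA * rA * (-1 + (d:ℝ) * rE ^ 2 * y ^ 2 - d * lE ^ 2) := by
    have hid2 : lE * rE * (-1 + (d:ℝ) * rA ^ 2 * y ^ 2 - d * lA ^ 2)
        - lA * rA * (-1 + (d:ℝ) * rE ^ 2 * y ^ 2 - d * lE ^ 2) = Q := by
      rw [hQdef]; linear_combination ((d:ℝ) * y ^ 2 * rA * rE + (d:ℝ) * lA * lE) * hrel
    rw [hid2]; exact hQ
  have hgoal : ((nE : ℝ) - rE * x) *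
        (-1 / (rA : ℝ) + d * rA * (y ^ 2 - ((nA : ℝ) - rA * x) ^ 2 / (rA : ℝ) ^ 2))
      - ((nA : ℝ) - rA * x) *
        (-1 / (rE : ℝ) + d * rE * (y ^ 2 - ((nE : ℝ) - rE * x) ^ 2 / (rE : ℝ) ^ 2))
      = (lE * rE * (-1 + (d:ℝ) * rA ^ 2 * y ^ 2 - d * lA ^ 2)
      - lA * rA * (-1 + (d:ℝ) * rE ^ 2 * y ^ 2 - d * lE ^ 2)) / (rA * rE) := by
    rw [hlAdef, hlEdef]; field_simp; ring
  rw [gt_iff_lt, hgoal]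
  exact div_pos hP (by positivity)
end

section
/- In the complexified Mukai lattice of a K3 surface with NS(X) = Z·L, L² = 2d: for β = xL, ω = yL with y > 0, and any class δ = (r, nL, s) with r > 0 and ⟨δ,δ⟩ = −2, if 2d·y² > 2 (i.e. ω² > 2) then ⟨exp(β + iω), δ⟩ ∉ R_{≤0}. Consequently (β, ω) ∈ 𝒱(X) for every β whenever ω² > 2. -/
/-- for `β = xL`, `ω = yL` with `y > 0` and `ω² = 2d·y² > 2`, and any class
`δ = (r, nL, s)` with `r > 0` and `⟨δ,δ⟩ = 2d·n² − 2rs = −2`, the complex number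
`⟨exp(β + iω), δ⟩ = 2dn(x+iy) − s − rd(x+iy)²` is not a nonpositive real number. -/
theorem stmt17 (d r n s : ℤ) (hd : 1 ≤ d) (hr : 0 < r)
    (hδ : 2 * d * n ^ 2 - 2 * r * s = -2)
    (x y : ℝ) (hy : 0 < y) (hω : 2 * (d : ℝ) * y ^ 2 > 2) :
    ¬ ((2 * (d : ℂ) * n * (x + y * Complex.I) - s
          - r * d * (x + y * Complex.I) ^ 2).im = 0 ∧
       (2 * (d : ℂ) * n * (x + y * Complex.I) - s
          - r * d * (x + y * Complex.I) ^ 2).re ≤ 0) := by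
  rintro ⟨him, hre⟩
  have hdR : (1:ℝ) ≤ (d:ℝ) := by exact_mod_cast hd
  have hrR : (0:ℝ) < (r:ℝ) := by exact_mod_cast hr
  simp [Complex.ext_iff, Complex.add_im, Complex.mul_im, Complex.mul_re, pow_two] at him hre
  -- him : 2*d*n*y - r*d*(x*y + y*x) = 0, i.e. n = r*x
  have hd0 : (0:ℝ) < (d:ℝ) := lt_of_lt_of_le one_pos hdR
  have hx : (n:ℝ) = r * x := by
    have hy' : y ≠ 0 := ne_of_gt hy
    have : 2 * (d:ℝ) * y * ((n:ℝ) - r * x) = 0 := by ring_nf; ring_nf at him; linarith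
    have := mul_eq_zero.mp this
    rcases this with h | h
    · exfalso; nlinarith
    · linarith
  -- key integer fact: d*n^2 = r*s - 1
  have hkey : (d:ℝ) * n^2 = r * s - 1 := by
    have : (d:ℤ) * n^2 = r*s - 1 := by linarith
    exact_mod_cast this
  -- real part: 2dn x - s - r d (x^2 - y^2)
  have : 2*(d:ℝ)*n*x - s - r*d*(x^2 - y^2) ≤ 0 := by
    ring_nf at hre ⊢; linarith
  -- substitute n = r x : re = d n^2 / r ... multiply by r
  have h2 : r * (2*(d:ℝ)*n*x - s - r*d*(x^2 - y^2)) = (r:ℝ)^2*d*y^2 - 1 := by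
    have : (r:ℝ)*x = n := hx.symm
    nlinarith [hkey]
  have hr1 : (1:ℝ) ≤ (r:ℝ) := by exact_mod_cast hr
  have h4 : (r:ℝ)^2*d*y^2 - 1 ≤ 0 := h2 ▸ mul_nonpos_of_nonneg_of_nonpos hrR.le this
  nlinarith [sq_nonneg y, mul_le_mul hr1 hr1 zero_le_one hrR.le]
end
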